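/- Let Ω ⊆ ℂ be open, F : Ω → ℂ holomorphic, U ⊆ ℂ open, and let m : (a,b) × U → ℂ be continuously differentiable (in both variables) such that for all (t,ζ), ζ + t·m(t,ζ) ∈ Ω, m(t,ζ) = F(ζ + t·m(t,ζ)), and 1 − t·F'(ζ + t·m(t,ζ)) ≠ 0. Then m satisfies the complex Burgers equation ∂_t m(t,ζ) = m(t,ζ) · ∂_ζ m(t,ζ) on (a,b) × U. -/

import Mathlib

/-!
Differentiating the implicit equation `m = F (ζ + t m)` in `t` and in `ζ` by the chain rule gives
`∂ₜm = F' (m + t ∂ₜm)` and `∂_ζ m = F' (1 + t ∂_ζ m)`, i.e. `∂ₜm (1 - t F') = F' m` and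
`∂_ζ m (1 - t F') = F'`; dividing by `1 - t F' ≠ 0` yields `∂ₜm = m ∂_ζ m`.
-/

open Filter Topology

theorem eq_mul_of_implicit_derivs {K : Type*} [Field K] {f' μ t μt μz : K}
    (hnd : 1 - t * f' ≠ 0) (ht : μt = f' * (μ + t * μt)) (hz : μz = f' * (1 + t * μz)) :
    μt = μ * μz :=
  mul_right_cancel₀ hnd (by linear_combination ht - μ * hz)

theorem HasDerivAt.implicit_time {F : ℂ → ℂ} {F' μ' ζ : ℂ} {μ : ℝ → ℂ} {t : ℝ}
    (hF : HasDerivAt F F' (ζ + t * μ t)) (hμ : HasDerivAt μ μ' t)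
    (heq : ∀ᶠ s in 𝓝 t, μ s = F (ζ + s * μ s)) :
    μ' = F' * (μ t + t * μ') := by
  have hinner : HasDerivAt (fun s : ℝ => ζ + (s : ℂ) * μ s) (μ t + t * μ') t := by
    simpa using ((hasDerivAt_id t).ofReal_comp.mul hμ).const_add ζ
  exact hμ.unique ((hF.comp t hinner).congr_of_eventuallyEq heq)

theorem HasDerivAt.implicit_space {F : ℂ → ℂ} {F' μ' ζ t : ℂ} {μ : ℂ → ℂ}
    (hF : HasDerivAt F F' (ζ + t * μ ζ)) (hμ : HasDerivAt μ μ' ζ)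
    (heq : ∀ᶠ z in 𝓝 ζ, μ z = F (z + t * μ z)) :
    μ' = F' * (1 + t * μ') :=
  hμ.unique ((hF.comp ζ ((hasDerivAt_id ζ).add (hμ.const_mul t))).congr_of_eventuallyEq heq)

theorem stmt_16 (Ω U : Set ℂ) (hΩ : IsOpen Ω) (hU : IsOpen U)
    (F : ℂ → ℂ) (hF : DifferentiableOn ℂ F Ω)
    (a b : ℝ) (m mt mz : ℝ → ℂ → ℂ)
    (hmem : ∀ t ∈ Set.Ioo a b, ∀ ζ ∈ U, ζ + (t : ℂ) * m t ζ ∈ Ω)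
    (hmt : ∀ t ∈ Set.Ioo a b, ∀ ζ ∈ U, HasDerivAt (fun s : ℝ => m s ζ) (mt t ζ) t)
    (hmz : ∀ t ∈ Set.Ioo a b, ∀ ζ ∈ U, HasDerivAt (fun z : ℂ => m t z) (mz t ζ) ζ)
    (heq : ∀ t ∈ Set.Ioo a b, ∀ ζ ∈ U, m t ζ = F (ζ + (t : ℂ) * m t ζ))
    (hnd : ∀ t ∈ Set.Ioo a b, ∀ ζ ∈ U, 1 - (t : ℂ) * deriv F (ζ + (t : ℂ) * m t ζ) ≠ 0) :
    ∀ t ∈ Set.Ioo a b, ∀ ζ ∈ U, mt t ζ = m t ζ * mz t ζ := by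
  intro t ht ζ hζ
  have hFw : HasDerivAt F (deriv F (ζ + t * m t ζ)) (ζ + t * m t ζ) :=
    (hF.differentiableAt (hΩ.mem_nhds (hmem t ht ζ hζ))).hasDerivAt
  have htime := hFw.implicit_time (hmt t ht ζ hζ)
    (eventually_of_mem (isOpen_Ioo.mem_nhds ht) fun s hs => heq s hs ζ hζ)
  have hspace := hFw.implicit_space (hmz t ht ζ hζ)
    (eventually_of_mem (hU.mem_nhds hζ) fun z hz => heq t ht z hz)
  exact eq_mul_of_implicit_derivs (hnd t ht ζ hζ) htime hspace
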